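/- arXiv:2501.05657 — 7 statements merged into one kernel-verified Lean document; each statement's English description precedes it below -/
import Mathlib

section
/- Fix d > 0, s > 0, η > 0, and real parameters k₀ and n_eff. For each positive integer M define the array gain of 2M equally spaced pinching antennas as a(M) = (η/(2M)) · | Σ_{n=1}^{M} 2·exp(−i·k₀·√(d² + Δ_n²))·cos(k₀·Δ_n·n_eff) / √(d² + Δ_n²) |², where Δ_n = (n − 1/2)·s. Then lim_{M→∞} a(M) = 0. -/
/-!
Since `|exp(-i k₀ r)| = 1`, `|cos| ≤ 1` and `√(d² + Δₙ²) ≥ Δₙ ≥ n s / 2`, the `n`-th term of the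
sum has modulus at most `4 / (s n)`. The sum is therefore bounded by `(4 / s)` times the harmonic
number `H_M ≤ 1 + log M`, and the array gain is `O((1 + log M)² / M)`, which tends to `0`.
-/

open Filter

theorem norm_sum_Icc_le_mul_one_add_log {E : Type*} [SeminormedAddCommGroup E]
    {b : ℕ → E} {C : ℝ} (hb : ∀ n ≥ 1, ‖b n‖ ≤ C / n) (M : ℕ) :
    ‖∑ n ∈ Finset.Icc 1 M, b n‖ ≤ C * (1 + Real.log M) := by
  have hC : 0 ≤ C := by simpa using (norm_nonneg _).trans (hb 1 le_rfl)
  calc ‖∑ n ∈ Finset.Icc 1 M, b n‖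
      ≤ ∑ n ∈ Finset.Icc 1 M, C * (n : ℝ)⁻¹ :=
        norm_sum_le_of_le _ fun n hn => (hb n (Finset.mem_Icc.mp hn).1).trans_eq (div_eq_mul_inv _ _)
    _ = C * harmonic M := by
        rw [← Finset.mul_sum, harmonic_eq_sum_Icc]; push_cast; rfl
    _ ≤ C * (1 + Real.log M) := mul_le_mul_of_nonneg_left (harmonic_le_one_add_log M) hC

theorem tendsto_one_add_log_sq_div_atTop :
    Tendsto (fun x : ℝ => (1 + Real.log x) ^ 2 / x) atTop (nhds 0) := by
  have hlog (k : ℕ) : Tendsto (fun x : ℝ => Real.log x ^ k / x) atTop (nhds 0) := by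
    simpa using Real.tendsto_pow_log_div_mul_add_atTop 1 0 k one_ne_zero
  have := (hlog 0).add (((hlog 1).const_mul 2).add (hlog 2))
  simp only [add_zero, mul_zero] at this
  refine this.congr fun x => ?_
  ring

theorem tendsto_const_div_mul_norm_sum_Icc_sq_of_norm_le_div {E : Type*}
    [SeminormedAddCommGroup E] {b : ℕ → E} {C : ℝ} (hb : ∀ n ≥ 1, ‖b n‖ ≤ C / n) (c : ℝ) :
    Tendsto (fun M : ℕ => c / M * ‖∑ n ∈ Finset.Icc 1 M, b n‖ ^ 2) atTop (nhds 0) := by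
  have hbound : Tendsto (fun M : ℕ => C ^ 2 * ((1 + Real.log M) ^ 2 / M)) atTop (nhds 0) := by
    simpa using (tendsto_one_add_log_sq_div_atTop.comp tendsto_natCast_atTop_atTop).const_mul (C ^ 2)
  have hsq : Tendsto (fun M : ℕ => ‖∑ n ∈ Finset.Icc 1 M, b n‖ ^ 2 / M) atTop (nhds 0) := by
    refine squeeze_zero (fun M => by positivity) (fun M => ?_) hbound
    rw [mul_div_assoc', ← mul_pow]
    gcongr
    exact norm_sum_Icc_le_mul_one_add_log hb M
  have hlim := hsq.const_mul c
  rw [mul_zero] at hlim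
  exact hlim.congr fun M => by ring

theorem norm_two_mul_exp_mul_cos_div_sqrt_le (d Δ k θ : ℝ) (hΔ : Δ ≠ 0) :
    ‖2 * Complex.exp (-Complex.I * k * Real.sqrt (d ^ 2 + Δ ^ 2)) * Real.cos θ /
        Real.sqrt (d ^ 2 + Δ ^ 2)‖ ≤ 2 / |Δ| := by
  have hΔr : |Δ| ≤ Real.sqrt (d ^ 2 + Δ ^ 2) := Real.abs_le_sqrt (by nlinarith)
  have hexp : ‖Complex.exp (-Complex.I * k * Real.sqrt (d ^ 2 + Δ ^ 2))‖ = 1 := by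
    rw [Complex.norm_exp]; simp
  rw [norm_div, norm_mul, norm_mul, hexp, Complex.norm_real, Complex.norm_real, Real.norm_eq_abs,
    Real.norm_of_nonneg (Real.sqrt_nonneg _)]
  calc ‖(2 : ℂ)‖ * 1 * |Real.cos θ| / Real.sqrt (d ^ 2 + Δ ^ 2) ≤ 2 / Real.sqrt (d ^ 2 + Δ ^ 2) := by
        gcongr; simpa using Real.abs_cos_le_one θ
    _ ≤ 2 / |Δ| := by gcongr

theorem sub_half_mul_pos {s : ℝ} (hs : 0 < s) {n : ℕ} (hn : 1 ≤ n) :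
    0 < ((n : ℝ) - 1 / 2) * s := by
  have hn' : (1 : ℝ) ≤ n := by exact_mod_cast hn
  nlinarith

theorem two_div_abs_sub_half_mul_le {s : ℝ} (hs : 0 < s) {n : ℕ} (hn : 1 ≤ n) :
    2 / |((n : ℝ) - 1 / 2) * s| ≤ 4 / s / n := by
  have hn' : (1 : ℝ) ≤ n := by exact_mod_cast hn
  rw [abs_of_pos (sub_half_mul_pos hs hn), div_div,
    div_le_div_iff₀ (sub_half_mul_pos hs hn) (by positivity)]
  nlinarith

theorem array_gain_equal_spacing_tendsto_zero_general
    (d s η k₀ neff : ℝ) (hs : 0 < s) :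
    Tendsto
      (fun M : ℕ =>
        η / (2 * M) *
          ‖∑ n ∈ Finset.Icc 1 M,
              2 * Complex.exp (-Complex.I * k₀ *
                    Real.sqrt (d ^ 2 + (((n : ℝ) - 1 / 2) * s) ^ 2)) *
                  Real.cos (k₀ * (((n : ℝ) - 1 / 2) * s) * neff) /
                Real.sqrt (d ^ 2 + (((n : ℝ) - 1 / 2) * s) ^ 2)‖ ^ 2)
      atTop (nhds 0) := by
  simp only [← div_div]
  exact tendsto_const_div_mul_norm_sum_Icc_sq_of_norm_le_div (fun n hn =>
    (norm_two_mul_exp_mul_cos_div_sqrt_le _ _ _ _ (sub_half_mul_pos hs hn).ne').trans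
      (two_div_abs_sub_half_mul_le hs hn)) (η / 2)

/-- Theorem 1: the array gain of `2M` equally spaced pinching antennas with
spacing `s` vanishes as `M → ∞`. -/
theorem array_gain_equal_spacing_tendsto_zero
    (d s η k₀ neff : ℝ) (hd : 0 < d) (hs : 0 < s) (hη : 0 < η) :
    Tendsto
      (fun M : ℕ =>
        η / (2 * M) *
          ‖∑ n ∈ Finset.Icc 1 M,
              2 * Complex.exp (-Complex.I * k₀ *
                    Real.sqrt (d ^ 2 + (((n : ℝ) - 1 / 2) * s) ^ 2)) *
                  Real.cos (k₀ * (((n : ℝ) - 1 / 2) * s) * neff) /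
                Real.sqrt (d ^ 2 + (((n : ℝ) - 1 / 2) * s) ^ 2)‖ ^ 2)
      atTop (nhds 0) :=
  array_gain_equal_spacing_tendsto_zero_general d s η k₀ neff hs
end

section
/- Define f_ub : (0, ∞) → ℝ by f_ub(x) = (ln(√(1 + x²) + x))² / x. Then f_ub attains its supremum: there exists x* > 0 such that f_ub(x) ≤ f_ub(x*) for all x > 0. -/
open Real Set

lemma f_eq_arsinh (x : ℝ) :
    Real.log (Real.sqrt (1 + x ^ 2) + x) = Real.arsinh x := by
  rw [Real.arsinh, add_comm]

lemma arsinh_le_self {x : ℝ} (hx : 0 ≤ x) : Real.arsinh x ≤ x := by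
  rw [← Real.sinh_le_sinh, Real.sinh_arsinh]
  rcases eq_or_lt_of_le hx with h | h
  · simp [← h]
  · exact (Real.self_lt_sinh_iff.2 h).le

lemma arsinh_le_log {x : ℝ} (hx : 0 ≤ x) : Real.arsinh x ≤ Real.log (1 + 2 * x) := by
  rw [Real.arsinh]
  have hs : Real.sqrt (1 + x ^ 2) ≤ 1 + x := by
    rw [show (1 : ℝ) + x = Real.sqrt ((1 + x) ^ 2) from (Real.sqrt_sq (by linarith)).symm]
    exact Real.sqrt_le_sqrt (by nlinarith)
  have hpos : 0 < x + Real.sqrt (1 + x ^ 2) := by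
    have := Real.sqrt_nonneg (1 + x ^ 2)
    have h1 : (1 : ℝ) ≤ Real.sqrt (1 + x ^ 2) :=
      Real.le_sqrt_of_sq_le (by nlinarith)
    linarith
  exact Real.log_le_log hpos (by linarith)

/-- `f_ub` attains its supremum on `(0, ∞)` at some `x* > 0`. -/
theorem f_ub_attains_max :
    ∃ xstar : ℝ, 0 < xstar ∧
      ∀ x : ℝ, 0 < x →
        (Real.log (Real.sqrt (1 + x ^ 2) + x)) ^ 2 / x ≤
          (Real.log (Real.sqrt (1 + xstar ^ 2) + xstar)) ^ 2 / xstar := by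
  set F : ℝ → ℝ := fun x => (Real.arsinh x) ^ 2 / x with hF
  have hcont : ContinuousOn F (Icc (0.4 : ℝ) 10000) := by
    apply ContinuousOn.div
    · exact (Real.continuous_arsinh.pow 2).continuousOn
    · exact continuousOn_id
    · intro x hx
      exact ne_of_gt (lt_of_lt_of_le (by norm_num) hx.1)
  obtain ⟨xstar, hmem, hmax⟩ :=
    isCompact_Icc.exists_isMaxOn (s := Icc (0.4 : ℝ) 10000)
      ⟨1, by norm_num⟩ hcont
  have hxpos : 0 < xstar := lt_of_lt_of_le (by norm_num) hmem.1
  refine ⟨xstar, hxpos, fun x hx => ?_⟩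
  rw [f_eq_arsinh, f_eq_arsinh]
  have hmax' : ∀ y ∈ Icc (0.4 : ℝ) 10000, F y ≤ F xstar := fun y hy => hmax hy
  -- lower bound on the max value
  have hlog2 : (0.6931471803 : ℝ) < Real.log 2 := Real.log_two_gt_d9
  have hF1 : (Real.log 2) ^ 2 ≤ F xstar := by
    have h1 : (Real.log 2) ^ 2 ≤ F 1 := by
      have : Real.log 2 ≤ Real.arsinh 1 := by
        rw [← f_eq_arsinh]
        apply Real.log_le_log (by norm_num)
        have : (1 : ℝ) ≤ Real.sqrt (1 + 1 ^ 2) :=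
          Real.le_sqrt_of_sq_le (by norm_num)
        linarith
      have h2 : (0 : ℝ) ≤ Real.log 2 := by linarith
      simp only [hF, div_one]
      exact pow_le_pow_left₀ h2 this 2
    exact h1.trans (hmax' 1 (by norm_num))
  have hlog2sq : (0.4 : ℝ) ≤ (Real.log 2) ^ 2 := by nlinarith
  have harsnn : 0 ≤ Real.arsinh x := Real.arsinh_nonneg_iff.2 hx.le
  rcases lt_or_ge x 0.4 with hsmall | hge
  · -- small x : F x ≤ x ≤ 0.4
    have h1 : Real.arsinh x ≤ x := arsinh_le_self hx.le
    have h2 : (Real.arsinh x) ^ 2 ≤ x ^ 2 := pow_le_pow_left₀ harsnn h1 2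
    have : (Real.arsinh x) ^ 2 / x ≤ x := by
      rw [div_le_iff₀ hx]; nlinarith
    calc (Real.arsinh x) ^ 2 / x ≤ x := this
      _ ≤ 0.4 := hsmall.le
      _ ≤ (Real.log 2) ^ 2 := hlog2sq
      _ ≤ F xstar := hF1
  rcases le_or_gt x 10000 with hle | hbig
  · exact hmax' x ⟨hge, hle⟩
  · -- large x : F x ≤ 0.4
    have hy : (0 : ℝ) ≤ 1 + 2 * x := by linarith
    set t : ℝ := (1 + 2 * x) ^ ((4 : ℝ)⁻¹) with ht
    have htnn : 0 ≤ t := Real.rpow_nonneg hy _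
    have ht4 : t ^ (4 : ℕ) = 1 + 2 * x := by
      rw [ht, ← Real.rpow_natCast _ 4, ← Real.rpow_mul hy]
      norm_num
    have hlogle : Real.log (1 + 2 * x) ≤ 4 * t := by
      have h := Real.log_le_rpow_div hy (show (0:ℝ) < 4⁻¹ by norm_num)
      rw [div_inv_eq_mul] at h
      linarith [h]
    have hloglenn : 0 ≤ Real.log (1 + 2 * x) := Real.log_nonneg (by linarith)
    have h1 : Real.arsinh x ≤ Real.log (1 + 2 * x) := arsinh_le_log hx.le
    have h2 : (Real.arsinh x) ^ 2 ≤ 16 * t ^ 2 := by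
      have := pow_le_pow_left₀ harsnn (h1.trans hlogle) 2
      nlinarith
    have h3 : 16 * t ^ 2 ≤ 0.4 * x := by nlinarith [sq_nonneg (x / 40 - t ^ 2), sq_nonneg t]
    have : (Real.arsinh x) ^ 2 / x ≤ 0.4 := by
      rw [div_le_iff₀ hx]; nlinarith
    linarith [hF1]
end

section
/- Define f_ub : (0, ∞) → ℝ by f_ub(x) = (ln(√(1 + x²) + x))² / x. Then f_ub(3.32) > 1.10, and f_ub(x) < 1.11 for every x > 0. -/
private lemma expPoly_le_exp {y : ℝ} (hy : 0 ≤ y) :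
    1 + y + y^2/2 + y^3/6 + y^4/24 + y^5/120 + y^6/720 + y^7/5040 + y^8/40320
      ≤ Real.exp y := by
  have h := Real.sum_le_exp_of_nonneg hy 9
  simp only [Finset.sum_range_succ, Finset.sum_range_zero] at h
  norm_num [Nat.factorial] at h
  linarith

private lemma exp_neg_le_poly {y : ℝ} (hy : 0 ≤ y) :
    Real.exp (-y) ≤
      1 - y + y^2/2 - y^3/6 + y^4/24 - y^5/120 + y^6/720 - y^7/5040 + y^8/40320 := by
  set P : ℝ := 1 + y + y^2/2 + y^3/6 + y^4/24 + y^5/120 + y^6/720 + y^7/5040 + y^8/40320 with hP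
  set Q : ℝ := 1 - y + y^2/2 - y^3/6 + y^4/24 - y^5/120 + y^6/720 - y^7/5040 + y^8/40320 with hQ
  have hPpos : 0 < P := by rw [hP]; positivity
  have hPexp : P ≤ Real.exp y := expPoly_le_exp hy
  have hprod : P * Q = 1 + y^10/201600 + y^12/1451520 + y^14/33868800 + y^16/1625702400 := by
    rw [hP, hQ]; ring
  have h10 : (0:ℝ) ≤ y^10 := pow_nonneg hy 10
  have h12 : (0:ℝ) ≤ y^12 := pow_nonneg hy 12
  have h14 : (0:ℝ) ≤ y^14 := pow_nonneg hy 14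
  have h16 : (0:ℝ) ≤ y^16 := pow_nonneg hy 16
  have hone : 1 ≤ P * Q := by rw [hprod]; linarith
  have h1 : 1 / P ≤ Q := (div_le_iff₀ hPpos).mpr (by linarith [hone])
  calc Real.exp (-y) = 1 / Real.exp y := by rw [Real.exp_neg, one_div]
    _ ≤ 1 / P := one_div_le_one_div_of_le hPpos hPexp
    _ ≤ Q := h1

private lemma sinh_lower {y : ℝ} (hy : 0 ≤ y) :
    y + y^3/6 + y^5/120 + y^7/5040 ≤ Real.sinh y := by
  rw [Real.sinh_eq]
  have h1 := expPoly_le_exp hy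
  have h2 := exp_neg_le_poly hy
  linarith

private lemma poly_ineq {y : ℝ} (hy : 0 < y) :
    y^2 < 1.11 * (y + y^3/6 + y^5/120 + y^7/5040) := by
  have h : 504000*y < 559440 + 93240*y^2 + 4662*y^4 + 111*y^6 := by
    nlinarith [sq_nonneg (y^2 - 23/6), sq_nonneg (y - 191/100), sq_nonneg (y^2 - 191*y/100),
      sq_nonneg (y^3 - 4*y), sq_nonneg y, mul_nonneg (sq_nonneg (y-191/100)) (sq_nonneg y),
      mul_nonneg (mul_nonneg (sq_nonneg (y-191/100)) (sq_nonneg y)) (sq_nonneg y)]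
  nlinarith [mul_lt_mul_of_pos_left h hy]

/-- Numerical bounds on the maximum of `f_ub`: `f_ub(3.32) > 1.10` and
`f_ub(x) < 1.11` for all `x > 0`. -/
theorem f_ub_numerical_bounds :
    (Real.log (Real.sqrt (1 + (3.32 : ℝ) ^ 2) + 3.32)) ^ 2 / 3.32 > 1.10 ∧
      ∀ x : ℝ, 0 < x →
        (Real.log (Real.sqrt (1 + x ^ 2) + x)) ^ 2 / x < 1.11 := by
  constructor
  · rw [gt_iff_lt, lt_div_iff₀ (by norm_num : (0:ℝ) < 3.32)]
    have hsqrt : (3.4673:ℝ) ≤ Real.sqrt (1 + (3.32:ℝ)^2) := by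
      rw [show ((1:ℝ) + (3.32:ℝ)^2) = 12.0224 by norm_num,
        show (3.4673:ℝ) = Real.sqrt (3.4673^2) from (Real.sqrt_sq (by norm_num)).symm]
      exact Real.sqrt_le_sqrt (by norm_num)
    have hlog : (1.9111:ℝ) < Real.log (Real.sqrt (1 + (3.32:ℝ)^2) + 3.32) := by
      have hA : (6.7873:ℝ) ≤ Real.sqrt (1 + (3.32:ℝ)^2) + 3.32 := by linarith
      have h1 : Real.log 6.7873 ≤ Real.log (Real.sqrt (1 + (3.32:ℝ)^2) + 3.32) :=
        Real.log_le_log (by norm_num) hA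
      have habs : |(0.1515875:ℝ)| = 0.1515875 := abs_of_pos (by norm_num)
      have key := Real.abs_log_sub_add_sum_range_le
        (x := (0.1515875:ℝ)) (by rw [habs]; norm_num) 4
      rw [habs, abs_le] at key
      simp only [Finset.sum_range_succ, Finset.sum_range_zero] at key
      norm_num at key
      obtain ⟨key1, key2⟩ := key
      have hlog2 := Real.log_two_gt_d9
      have hlog8 : Real.log 6.7873 = 3 * Real.log 2 + Real.log 0.8484125 := by
        rw [show (6.7873:ℝ) = 2^3 * 0.8484125 by norm_num,
          Real.log_mul (by norm_num) (by norm_num), Real.log_pow]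
        push_cast; ring
      linarith
    nlinarith [hlog, sq_nonneg (Real.log (Real.sqrt (1 + (3.32:ℝ)^2) + 3.32) - 1.9111)]
  · intro x hx
    have harsinh : Real.log (Real.sqrt (1 + x^2) + x) = Real.arsinh x := by
      rw [show Real.sqrt (1 + x^2) + x = x + Real.sqrt (1 + x^2) from add_comm _ _]
      rfl
    rw [harsinh, div_lt_iff₀ hx]
    have hy : 0 < Real.arsinh x := Real.arsinh_pos_iff.mpr hx
    set y := Real.arsinh x with hydef
    have hs : Real.sinh y = x := Real.sinh_arsinh x
    calc y^2 < 1.11 * (y + y^3/6 + y^5/120 + y^7/5040) := poly_ineq hy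
      _ ≤ 1.11 * Real.sinh y := by nlinarith [sinh_lower hy.le]
      _ = 1.11 * x := by rw [hs]
end

section
/- For every x with 0 < x ≤ 3, one has 2x/√(1 + x²) > ln(√(1 + x²) + x). Consequently, the function f_ub(x) = (ln(√(1 + x²) + x))² / x is strictly increasing on (0, 3]. -/
open Real

private lemma arsinh_eq' (y : ℝ) :
    Real.log (Real.sqrt (1 + y ^ 2) + y) = Real.arsinh y := by
  show Real.log (Real.sqrt (1 + y ^ 2) + y) = Real.log (y + Real.sqrt (1 + y ^ 2))
  rw [add_comm]

private lemma key_ineq (x : ℝ) (hx0 : 0 < x) (hx3 : x ≤ 3) :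
    Real.arsinh x < 2 * x / Real.sqrt (1 + x ^ 2) := by
  set s := Real.sqrt (1 + x ^ 2) with hs
  have hs0 : 0 < s := Real.sqrt_pos.2 (by positivity)
  have hs2 : s ^ 2 = 1 + x ^ 2 := Real.sq_sqrt (by positivity)
  have hs1 : 1 ≤ s := by nlinarith
  have hLdef : Real.arsinh x = Real.log (s + x) := (arsinh_eq' x).symm
  rcases le_or_gt (x ^ 2) 3 with hsmall | hbig
  · -- small case: log (s+x) < x ≤ 2x/s since s ≤ 2
    have hsle2 : s ≤ 2 := by nlinarith
    have ht1 : (1:ℝ) < s + x := by linarith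
    have hinv : (s + x)⁻¹ = s - x := by
      rw [inv_eq_iff_eq_inv, eq_comm, inv_eq_iff_eq_inv, eq_comm]
      · field_simp
        nlinarith
    have hexp : 1 + x + x ^ 2 / 2 ≤ Real.exp x := by
      have h := Real.sum_le_exp_of_nonneg (le_of_lt hx0) 3
      rw [Finset.sum_range_succ, Finset.sum_range_succ, Finset.sum_range_one] at h
      norm_num [Nat.factorial] at h
      linarith
    have hslt : s < 1 + x ^ 2 / 2 := by
      rw [hs]
      rw [show (1:ℝ) + x ^ 2 / 2 = (1 + x ^ 2 / 2) from rfl]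
      refine (Real.sqrt_lt' (by positivity)).2 ?_
      nlinarith [pow_pos hx0 4]
    have hlogx : Real.log (s + x) < x := by
      rw [Real.log_lt_iff_lt_exp (by positivity)]
      linarith
    have : x ≤ 2 * x / s := by
      rw [le_div_iff₀ hs0]; nlinarith
    rw [hLdef]; linarith
  · -- big case: tangent line bound at c = exp (3/2)
    set c := Real.exp (3 / 2) with hc
    have hc0 : 0 < c := Real.exp_pos _
    have hc2 : c ^ 2 = Real.exp 1 ^ 3 := by
      rw [hc, ← Real.exp_nat_mul, ← Real.exp_nat_mul]; norm_num
    have he1 : 2.7182818283 < Real.exp 1 := Real.exp_one_gt_d9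
    have he2 : Real.exp 1 < 2.7182818286 := Real.exp_one_lt_d9
    have he1c : (2.7182818283:ℝ) ^ 3 < Real.exp 1 ^ 3 :=
      pow_lt_pow_left₀ he1 (by norm_num) (by norm_num)
    have he2c : Real.exp 1 ^ 3 < (2.7182818286:ℝ) ^ 3 :=
      pow_lt_pow_left₀ he2 (by positivity) (by norm_num)
    have hcl : 4.4816 < c := by
      have : (4.4816:ℝ) ^ 2 < c ^ 2 := by rw [hc2]; nlinarith
      nlinarith
    have hcu : c < 4.4818 := by
      have : c ^ 2 < (4.4818:ℝ) ^ 2 := by rw [hc2]; nlinarith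
      nlinarith
    have ht0 : (0:ℝ) < s + x := by linarith
    have hlog : Real.log (s + x) ≤ 3 / 2 + ((s + x) / c - 1) := by
      have := Real.log_le_sub_one_of_pos (show 0 < (s + x) / c by positivity)
      rw [Real.log_div (ne_of_gt ht0) (ne_of_gt hc0), hc, Real.log_exp] at this
      linarith
    have hmain : 1 / 2 + (s + x) / c < 2 * x / s := by
      rw [div_add_div _ _ two_ne_zero (ne_of_gt hc0), div_lt_div_iff₀ (by positivity) hs0]
      nlinarith [sq_nonneg (x - 3), sq_nonneg (s - 3.1623), mul_pos hs0 hc0,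
        mul_pos hx0 hc0, mul_pos hx0 hs0]
    rw [hLdef]; linarith

private lemma hasDerivAt_f (x : ℝ) (hx : x ≠ 0) :
    HasDerivAt (fun x : ℝ => (Real.arsinh x) ^ 2 / x)
      ((2 * Real.arsinh x ^ 1 * (Real.sqrt (1 + x ^ 2))⁻¹ * x - Real.arsinh x ^ 2 * 1) / x ^ 2)
      x :=
  ((Real.hasDerivAt_arsinh x).pow 2).div (hasDerivAt_id x) hx

/-- For `0 < x ≤ 3`, `2x/√(1+x²) > ln(√(1+x²)+x)`; consequently
`f_ub(x) = (ln(√(1+x²)+x))²/x` is strictly increasing on `(0, 3]`. -/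
theorem f_ub_strictMonoOn :
    (∀ x : ℝ, 0 < x → x ≤ 3 →
        Real.log (Real.sqrt (1 + x ^ 2) + x) < 2 * x / Real.sqrt (1 + x ^ 2)) ∧
      StrictMonoOn (fun x : ℝ => (Real.log (Real.sqrt (1 + x ^ 2) + x)) ^ 2 / x)
        (Set.Ioc 0 3) := by
  constructor
  · intro x hx0 hx3
    rw [arsinh_eq']
    exact key_ineq x hx0 hx3
  · have hfeq : (fun x : ℝ => (Real.log (Real.sqrt (1 + x ^ 2) + x)) ^ 2 / x)
        = fun x : ℝ => (Real.arsinh x) ^ 2 / x := by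
      funext y; rw [arsinh_eq']
    rw [hfeq]
    apply strictMonoOn_of_deriv_pos (convex_Ioc 0 3)
    · intro x hx
      exact ((hasDerivAt_f x (ne_of_gt hx.1)).continuousAt).continuousWithinAt
    · intro x hx
      rw [interior_Ioc] at hx
      obtain ⟨hx0, hx3⟩ := hx
      rw [(hasDerivAt_f x (ne_of_gt hx0)).deriv]
      have hs0 : 0 < Real.sqrt (1 + x ^ 2) := Real.sqrt_pos.2 (by positivity)
      have hL0 : 0 < Real.arsinh x := Real.arsinh_pos_iff.2 hx0
      have hkey := key_ineq x hx0 (le_of_lt hx3)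
      have h2 : Real.arsinh x * (Real.sqrt (1 + x ^ 2))⁻¹ * x > 0 := by positivity
      apply div_pos _ (by positivity)
      have : Real.arsinh x < 2 * x * (Real.sqrt (1 + x ^ 2))⁻¹ := by
        rwa [div_eq_mul_inv] at hkey
      nlinarith
end

section
/- For every x ≥ 4, one has 2x/√(1 + x²) < ln(√(1 + x²) + x). Consequently, the function f_ub(x) = (ln(√(1 + x²) + x))² / x is strictly decreasing on [4, ∞). -/
/-! With `L(x) = ln(√(1+x²)+x) = arsinh x` we have `L' = 1/√(1+x²)`, so
`(L²/x)' = L · (2x/√(1+x²) - L) / x²`. Here `2x/√(1+x²) = 2 tanh L < 2`, while for `x ≥ 4`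
`L(x) ≥ L(4) > 2` because `e² < 8 < 4 + √17`; hence the derivative is negative on `[4, ∞)`. -/

open Real Set

lemma log_sqrt_one_add_sq_add_self (x : ℝ) : log (√(1 + x ^ 2) + x) = arsinh x := by
  rw [arsinh, add_comm]

lemma two_mul_div_sqrt_one_add_sq_lt_two (x : ℝ) : 2 * x / √(1 + x ^ 2) < 2 := by
  rw [mul_div_assoc, ← tanh_arsinh]
  linarith [tanh_lt_one (arsinh x)]

lemma two_lt_arsinh_four : 2 < arsinh 4 := by
  rw [← exp_lt_exp, exp_arsinh]
  have exp_two_lt_eight : exp 2 < 8 := by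
    rw [show (2 : ℝ) = 1 + 1 by norm_num, exp_add]
    nlinarith [exp_one_lt_d9, exp_pos 1]
  have four_lt_sqrt : (4 : ℝ) < √(1 + 4 ^ 2) := by
    rw [lt_sqrt (by norm_num)]; norm_num
  linarith

lemma two_mul_div_sqrt_one_add_sq_lt_arsinh {x : ℝ} (hx : 4 ≤ x) :
    2 * x / √(1 + x ^ 2) < arsinh x :=
  calc 2 * x / √(1 + x ^ 2) < 2 := two_mul_div_sqrt_one_add_sq_lt_two x
    _ < arsinh 4 := two_lt_arsinh_four
    _ ≤ arsinh x := arsinh_le_arsinh.2 hx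

lemma hasDerivAt_arsinh_sq_div_self {x : ℝ} (hx : x ≠ 0) :
    HasDerivAt (fun y => arsinh y ^ 2 / y)
      (arsinh x * (2 * x / √(1 + x ^ 2) - arsinh x) / x ^ 2) x :=
  (((hasDerivAt_arsinh x).fun_pow 2).fun_div (hasDerivAt_id' x) hx).congr_deriv (by ring)

lemma strictAntiOn_arsinh_sq_div_self :
    StrictAntiOn (fun x => arsinh x ^ 2 / x) (Ici 4) := by
  have hx_ne {x : ℝ} (hx : 4 ≤ x) : x ≠ 0 := by positivity
  refine strictAntiOn_of_hasDerivWithinAt_neg (convex_Ici 4)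
    (f' := fun x => arsinh x * (2 * x / √(1 + x ^ 2) - arsinh x) / x ^ 2)
    (fun x hx => (hasDerivAt_arsinh_sq_div_self (hx_ne hx)).continuousAt.continuousWithinAt)
    (fun x hx => ?_) (fun x hx => ?_) <;> rw [interior_Ici, mem_Ioi] at hx
  · exact (hasDerivAt_arsinh_sq_div_self (hx_ne hx.le)).hasDerivWithinAt
  · have arsinh_pos : 0 < arsinh x := arsinh_pos_iff.2 (by linarith)
    have hlt := two_mul_div_sqrt_one_add_sq_lt_arsinh hx.le
    exact div_neg_of_neg_of_pos (mul_neg_of_pos_of_neg arsinh_pos (by linarith)) (by positivity)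

/-- For `x ≥ 4`, `2x/√(1+x²) < ln(√(1+x²)+x)`; consequently
`f_ub(x) = (ln(√(1+x²)+x))²/x` is strictly decreasing on `[4, ∞)`. -/
theorem f_ub_strictAntiOn :
    (∀ x : ℝ, 4 ≤ x →
        2 * x / Real.sqrt (1 + x ^ 2) < Real.log (Real.sqrt (1 + x ^ 2) + x)) ∧
      StrictAntiOn (fun x : ℝ => (Real.log (Real.sqrt (1 + x ^ 2) + x)) ^ 2 / x)
        (Set.Ici 4) := by
  simp only [log_sqrt_one_add_sq_add_self]
  exact ⟨fun _ => two_mul_div_sqrt_one_add_sq_lt_arsinh, strictAntiOn_arsinh_sq_div_self⟩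
end

section
/- Let η > 0, d > 0, Δ > 0, k₀ > 0, and n_eff, φ ∈ ℝ, and suppose J := sin(k₀Δ)/(k₀Δ) satisfies −1 < J < 1. Let C₂ be the 2×2 matrix with diagonal entries 1 and off-diagonal entries J, and let M = C₂^{−1/2} be its (symmetric positive definite) inverse square root. Set h = √η·exp(i·φ)/√(d² + Δ²/4) ∈ ℂ and θ = (n_eff/2)·k₀·Δ. Then (1/2)·| (h, h)·M·(exp(−i·θ), exp(i·θ))ᵀ |² = 2η·cos²((n_eff/2)·k₀·Δ) / ((d² + Δ²/4)·(1 + J)). -/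
open Matrix

/-- The mutual-coupling-aware array gain formula (19) for `N = 2` pinching
antennas: `M` is the symmetric positive definite inverse square root of the
coupling matrix `C₂`, `h` the common channel coefficient, and
`θ = (n_eff/2)·k₀·Δ` the in-waveguide phase offset. -/
theorem array_gain_two_antennas_mutual_coupling
    (η d Δ k₀ neff φ : ℝ) (hη : 0 < η) (hd : 0 < d) (hΔ : 0 < Δ) (hk : 0 < k₀)
    (J : ℝ) (hJdef : J = Real.sin (k₀ * Δ) / (k₀ * Δ)) (hJ : -1 < J) (hJ' : J < 1)
    (M : Matrix (Fin 2) (Fin 2) ℝ) (hMsymm : M.IsSymm) (hMpd : M.PosDef)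
    (hMinvsqrt : M * !![1, J; J, 1] * M = 1)
    (h : ℂ) (hhdef : h = Real.sqrt η * Complex.exp (Complex.I * φ) /
      Real.sqrt (d ^ 2 + Δ ^ 2 / 4))
    (θ : ℝ) (hθdef : θ = neff / 2 * k₀ * Δ) :
    1 / 2 *
        ‖(dotProduct ![h, h]
            ((M.map (fun x : ℝ => (x : ℂ))) *ᵥ
              ![Complex.exp (-Complex.I * θ), Complex.exp (Complex.I * θ)]))‖ ^ 2 =
      2 * η * Real.cos (neff / 2 * k₀ * Δ) ^ 2 /
        ((d ^ 2 + Δ ^ 2 / 4) * (1 + J)) := by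
  have hba := hMsymm.apply 0 1
  have e00 := congrFun (congrFun hMinvsqrt 0) 0
  have e01 := congrFun (congrFun hMinvsqrt 0) 1
  have e11 := congrFun (congrFun hMinvsqrt 1) 1
  simp [Matrix.mul_apply, Fin.sum_univ_two, Matrix.one_apply] at e00 e01 e11
  have p1 := hMpd.dotProduct_mulVec_pos (x := ![1,1]) (by simp [Function.ne_iff])
  have p0 := hMpd.dotProduct_mulVec_pos (x := ![1,0]) (by simp [Function.ne_iff])
  have p2 := hMpd.dotProduct_mulVec_pos (x := ![0,1]) (by simp [Function.ne_iff])
  have hdet := hMpd.det_pos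
  rw [Matrix.det_fin_two] at hdet
  simp [dotProduct, Matrix.mulVec, Fin.sum_univ_two] at p1 p0 p2
  set a := M 0 0 with ha
  set b := M 0 1 with hb
  set c := M 1 1 with hc
  rw [hba] at e00 e11 hdet p1
  -- key algebraic facts
  have hsum : (a + c + 2*b*J) * (a*c - b^2) = a + c := by linear_combination c*e00 + a*e11 - 2*b*e01
  have htr : 0 < a + c + 2*b*J := by nlinarith [hsum, hdet, p0, p2]
  have hac : a = c := by
    have hz : (a - c) * (a + c + 2*b*J) = 0 := by linear_combination e00 - e11
    rcases mul_eq_zero.1 hz with h1 | h1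
    · linarith
    · linarith
  rw [← hac] at e01 p1
  have hs2 : (a + b)^2 * (1 + J) = 1 := by linear_combination e00 + e01
  have hs : 0 < a + b := by linarith
  have h1J : 0 < 1 + J := by linarith
  -- complex computation
  have hD : (0:ℝ) < d ^ 2 + Δ ^ 2 / 4 := by positivity
  have he1 : Complex.exp (Complex.I * θ) = Real.cos θ + Real.sin θ * Complex.I := by
    rw [mul_comm, Complex.exp_mul_I, Complex.ofReal_cos, Complex.ofReal_sin]
  have he2 : Complex.exp (-(Complex.I * θ)) = Real.cos θ - Real.sin θ * Complex.I := by
    have : -(Complex.I * θ) = ((-θ : ℝ) : ℂ) * Complex.I := by push_cast; ring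
    rw [this, Complex.exp_mul_I, Complex.ofReal_cos, Complex.ofReal_sin]
    push_cast
    simp [Complex.cos_neg, Complex.sin_neg]
    ring
  have hdot : dotProduct ![h, h]
            ((M.map (fun x : ℝ => (x : ℂ))) *ᵥ
              ![Complex.exp (-Complex.I * θ), Complex.exp (Complex.I * θ)])
      = h * ((a + b : ℝ) : ℂ) * ((2 * Real.cos θ : ℝ) : ℂ) := by
    simp only [dotProduct, Matrix.mulVec, Fin.sum_univ_two, Matrix.map_apply,
      Matrix.cons_val_zero, Matrix.cons_val_one, Matrix.head_cons, neg_mul,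
      ← ha, ← hb, ← hc, hba, ← hac, he1, he2]
    push_cast
    ring
  rw [hdot, hhdef]
  rw [norm_mul, norm_mul, norm_div, norm_mul, Complex.norm_real, Complex.norm_real, Complex.norm_real,
    Complex.norm_real, Real.norm_eq_abs, Real.norm_eq_abs, Real.norm_eq_abs, Real.norm_eq_abs, Complex.norm_exp]
  have hre : (Complex.I * (φ:ℂ)).re = 0 := by simp
  rw [hre, Real.exp_zero]
  rw [abs_of_nonneg (Real.sqrt_nonneg η), abs_of_nonneg (Real.sqrt_nonneg _),
    abs_of_pos hs]
  have hsqη : Real.sqrt η ^ 2 = η := Real.sq_sqrt hη.le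
  have hsqD : Real.sqrt (d ^ 2 + Δ ^ 2 / 4) ^ 2 = d ^ 2 + Δ ^ 2 / 4 := Real.sq_sqrt hD.le
  have key : (Real.sqrt η * 1 / Real.sqrt (d ^ 2 + Δ ^ 2 / 4) * (a + b) * |2 * Real.cos θ|) ^ 2
      = η / (d ^ 2 + Δ ^ 2 / 4) * ((a + b) ^ 2 * (4 * Real.cos θ ^ 2)) := by
    rw [mul_pow, mul_pow, div_pow, mul_pow, hsqη, hsqD, sq_abs]
    ring
  rw [key, hθdef]
  have hab2 : (a + b) ^ 2 = 1 / (1 + J) := by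
    rw [eq_div_iff (by linarith : (1:ℝ) + J ≠ 0)]; linarith [hs2]
  rw [hab2]
  field_simp
  ring
end

section
/- Let η > 0, d > 0, k₀ > 0, and n_eff ∈ ℝ. Then lim_{Δ→0⁺} 2η·cos²((n_eff/2)·k₀·Δ) / ( (d² + Δ²/4)·(1 + sin(k₀·Δ)/(k₀·Δ)) ) = η/d². -/
open Filter Topology Real

/-! Off `Δ = 0` the coupling factor `sin (k₀ Δ) / (k₀ Δ)` is `sinc (k₀ Δ)`, and `sinc` is continuous
with `sinc 0 = 1`. Hence the numerator tends to `2η` and the denominator to `d² · 2`, not `d²`: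
mutual coupling doubles the denominator and halves the gain. -/

lemma tendsto_sin_mul_div_mul_nhdsNE {k : ℝ} (hk : k ≠ 0) :
    Tendsto (fun x => sin (k * x) / (k * x)) (𝓝[≠] 0) (𝓝 1) := by
  have hsinc : Tendsto (fun x => sinc (k * x)) (𝓝[≠] 0) (𝓝 1) := by
    have := (continuous_sinc.comp (continuous_const_mul k)).tendsto 0
    simpa [Function.comp_def] using this.mono_left nhdsWithin_le_nhds
  refine hsinc.congr' ?_
  filter_upwards [self_mem_nhdsWithin] with x hx
  exact sinc_of_ne_zero (mul_ne_zero hk hx)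

lemma tendsto_array_gain_nhdsNE (η d k₀ neff : ℝ) (hd : d ≠ 0) (hk : k₀ ≠ 0) :
    Tendsto
      (fun Δ : ℝ =>
        2 * η * cos (neff / 2 * k₀ * Δ) ^ 2 /
          ((d ^ 2 + Δ ^ 2 / 4) * (1 + sin (k₀ * Δ) / (k₀ * Δ))))
      (𝓝[≠] 0) (𝓝 (η / d ^ 2)) := by
  have hnum : Tendsto (fun Δ : ℝ => 2 * η * cos (neff / 2 * k₀ * Δ) ^ 2) (𝓝[≠] 0)
      (𝓝 (2 * η)) := by
    have := (show Continuous fun Δ : ℝ => 2 * η * cos (neff / 2 * k₀ * Δ) ^ 2 by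
      fun_prop).tendsto 0
    simpa using this.mono_left nhdsWithin_le_nhds
  have hdist : Tendsto (fun Δ : ℝ => d ^ 2 + Δ ^ 2 / 4) (𝓝[≠] 0) (𝓝 (d ^ 2)) := by
    have := (show Continuous fun Δ : ℝ => d ^ 2 + Δ ^ 2 / 4 by fun_prop).tendsto 0
    simpa using this.mono_left nhdsWithin_le_nhds
  have hden :=
    hdist.mul ((tendsto_const_nhds (x := (1 : ℝ))).add (tendsto_sin_mul_div_mul_nhdsNE hk))
  rw [show η / d ^ 2 = 2 * η / (d ^ 2 * (1 + 1)) by field_simp; ring]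
  exact hnum.div hden (by positivity)

theorem array_gain_mutual_coupling_limit_general
    (η d k₀ neff : ℝ) (hd : 0 < d) (hk : 0 < k₀) :
    Tendsto
      (fun Δ : ℝ =>
        2 * η * Real.cos (neff / 2 * k₀ * Δ) ^ 2 /
          ((d ^ 2 + Δ ^ 2 / 4) * (1 + Real.sin (k₀ * Δ) / (k₀ * Δ))))
      (nhdsWithin 0 (Set.Ioi 0)) (nhds (η / d ^ 2)) :=
  (tendsto_array_gain_nhdsNE η d k₀ neff hd.ne' hk.ne').mono_left
    (nhdsWithin_mono _ fun _ hx => ne_of_gt hx)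

/-- Remark 4: as the spacing `Δ → 0⁺`, the mutual-coupling-aware array gain of
two pinching antennas converges to `η/d²`. -/
theorem array_gain_mutual_coupling_limit
    (η d k₀ neff : ℝ) (hη : 0 < η) (hd : 0 < d) (hk : 0 < k₀) :
    Tendsto
      (fun Δ : ℝ =>
        2 * η * Real.cos (neff / 2 * k₀ * Δ) ^ 2 /
          ((d ^ 2 + Δ ^ 2 / 4) * (1 + Real.sin (k₀ * Δ) / (k₀ * Δ))))
      (nhdsWithin 0 (Set.Ioi 0)) (nhds (η / d ^ 2)) :=
  array_gain_mutual_coupling_limit_general η d k₀ neff hd hk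
end
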